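/- Let H₁, H₂, H₃ be real Hilbert spaces, ε > 0, and f a C² real-valued function on B_ε(0) × B_ε(0) × B_ε(0) ⊂ H₁ × H₂ × H₃. Assume the partial differential d₃f(x₁, 0, 0) = 0 for all x₁ ∈ B_ε(0) ⊂ H₁, and that the second partial differential d₃²f(0,0,0) : H₃ → H₃ is a bounded invertible linear operator. Then there exist δ ∈ (0, ε) and a C¹ map h : B_δ(0) × B_δ(0) → H₃ with h(0,0) = 0 such that d₃f(x₁, x₂, h(x₁,x₂)) = 0 for all (x₁,x₂) ∈ B_δ(0) × B_δ(0), and the function g(x₁,x₂) := f(x₁, x₂, h(x₁,x₂)) is C² with dg(x₁,x₂) = d_{(1,2)}f(x₁, x₂, h(x₁,x₂)). -/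

import Mathlib

/-!
Write `φ(x, y) = f(x₁, x₂, y)` with `x = (x₁, x₂)`. The partial gradient `Ψ(x, y) = ∇_y φ(x, y)`
is C¹, vanishes at the origin, and its derivative in `y` there is the invertible Hessian, so the
implicit function theorem yields a C¹ map `h` with `Ψ(x, h x) = 0`. In the chain rule for
`g(x) = φ(x, h x)` the term through `dh` is `∂_y φ(x, h x) ∘ dh x = 0`, hence
`dg(x) = ∂_x φ(x, h x)`, which is C¹ as a composite of `dφ` and `x ↦ (x, h x)`; so `g` is C².
-/

open Metric Topology Filter ContinuousLinearMap

section PartialDerivatives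

variable {𝕜 : Type*} [NontriviallyNormedField 𝕜]
  {E : Type*} [NormedAddCommGroup E] [NormedSpace 𝕜 E]
  {F : Type*} [NormedAddCommGroup F] [NormedSpace 𝕜 F]
  {G : Type*} [NormedAddCommGroup G] [NormedSpace 𝕜 G]
  {φ : E × F → G}

theorem DifferentiableAt.fderiv_partial_left {x : E} {y : F} (hφ : DifferentiableAt 𝕜 φ (x, y)) :
    fderiv 𝕜 (fun x' => φ (x', y)) x = fderiv 𝕜 φ (x, y) ∘L inl 𝕜 E F :=
  (hφ.hasFDerivAt.comp x (hasFDerivAt_prodMk_left x y)).fderiv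

theorem DifferentiableAt.fderiv_partial_right {x : E} {y : F} (hφ : DifferentiableAt 𝕜 φ (x, y)) :
    fderiv 𝕜 (fun y' => φ (x, y')) y = fderiv 𝕜 φ (x, y) ∘L inr 𝕜 E F :=
  (hφ.hasFDerivAt.comp y (hasFDerivAt_prodMk_right x y)).fderiv

theorem hasFDerivAt_comp_graph_of_fderiv_partial_right_eq_zero {h : E → F} {x : E}
    (hφ : DifferentiableAt 𝕜 φ (x, h x)) (hh : DifferentiableAt 𝕜 h x)
    (hcrit : fderiv 𝕜 (fun y => φ (x, y)) (h x) = 0) :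
    HasFDerivAt (fun x' => φ (x', h x')) (fderiv 𝕜 (fun x' => φ (x', h x)) x) x := by
  have hchain := hφ.hasFDerivAt.comp x ((hasFDerivAt_id x).prodMk hh.hasFDerivAt)
  rw [hφ.fderiv_partial_right] at hcrit
  refine hchain.congr_fderiv ?_
  rw [hφ.fderiv_partial_left]
  ext v
  have hsplit : (v, fderiv 𝕜 h x v) = inl 𝕜 E F v + inr 𝕜 E F (fderiv 𝕜 h x v) := by simp
  rw [comp_apply, comp_apply, prod_apply, id_apply, hsplit, map_add,
    ← comp_apply (fderiv 𝕜 φ (x, h x)) (inr 𝕜 E F), hcrit, zero_apply, add_zero]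

theorem ContDiffOn.comp_graph_of_fderiv_partial_right_eq_zero {h : E → F} {V : Set (E × F)}
    {W : Set E} {n : ℕ∞} (hn : 1 ≤ n) (hV : IsOpen V) (hW : IsOpen W)
    (hφ : ContDiffOn 𝕜 (n + 1) φ V) (hh : ContDiffOn 𝕜 n h W) (hmaps : ∀ x ∈ W, (x, h x) ∈ V)
    (hcrit : ∀ x ∈ W, fderiv 𝕜 (fun y => φ (x, y)) (h x) = 0) :
    ContDiffOn 𝕜 (n + 1) (fun x => φ (x, h x)) W := by
  have hφd : ∀ x ∈ W, DifferentiableAt 𝕜 φ (x, h x) := fun x hx =>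
    (hφ.differentiableOn (by simp)).differentiableAt (hV.mem_nhds (hmaps x hx))
  have hn0 : (n : WithTop ℕ∞) ≠ 0 := by exact_mod_cast (zero_lt_one.trans_le hn).ne'
  have hhd : ∀ x ∈ W, DifferentiableAt 𝕜 h x := fun x hx =>
    (hh.differentiableOn hn0).differentiableAt (hW.mem_nhds hx)
  have hderiv : ∀ x ∈ W,
      HasFDerivAt (fun x' => φ (x', h x')) (fderiv 𝕜 φ (x, h x) ∘L inl 𝕜 E F) x :=
    fun x hx => (hφd x hx).fderiv_partial_left ▸
      hasFDerivAt_comp_graph_of_fderiv_partial_right_eq_zero (hφd x hx) (hhd x hx) (hcrit x hx)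
  rw [contDiffOn_succ_iff_fderiv_of_isOpen hW]
  refine ⟨fun x hx => (hderiv x hx).differentiableAt.differentiableWithinAt, by simp, ?_⟩
  have hgraph : ContDiffOn 𝕜 n (fun x => (x, h x)) W := contDiffOn_id.prodMk hh
  refine ContDiffOn.congr ?_ fun x hx => (hderiv x hx).fderiv
  exact (((compL 𝕜 E (E × F) G).flip (inl 𝕜 E F)).contDiff.comp_contDiffOn
    ((hφ.fderiv_of_isOpen hV le_rfl).comp hgraph hmaps))

end PartialDerivatives

section PartialGradient

variable {E : Type*} [NormedAddCommGroup E] [NormedSpace ℝ E]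
  {F : Type*} [NormedAddCommGroup F] [InnerProductSpace ℝ F] [CompleteSpace F]
  {φ : E × F → ℝ} {V : Set (E × F)}

theorem ContDiffOn.gradient_partial_right {n : WithTop ℕ∞} (hV : IsOpen V)
    (hφ : ContDiffOn ℝ (n + 1) φ V) :
    ContDiffOn ℝ n (fun q : E × F => gradient (fun y => φ (q.1, y)) q.2) V := by
  have hφd : ∀ q ∈ V, DifferentiableAt ℝ φ q := fun q hq =>
    (hφ.differentiableOn (by simp)).differentiableAt (hV.mem_nhds hq)
  refine ContDiffOn.congr ?_ fun q hq => by
    rw [gradient, (hφd q hq).fderiv_partial_right]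
  exact (InnerProductSpace.toDual ℝ F).symm.toContinuousLinearEquiv.contDiff.comp_contDiffOn
    (((compL ℝ F (E × F) ℝ).flip (inr ℝ E F)).contDiff.comp_contDiffOn
      (hφ.fderiv_of_isOpen hV le_rfl))

theorem exists_contDiffAt_fderiv_partial_right_eq_zero [CompleteSpace E] {a : E} {b : F}
    (hV : IsOpen V) (hφ : ContDiffOn ℝ 2 φ V) (hab : (a, b) ∈ V)
    (hcrit : fderiv ℝ (fun y => φ (a, y)) b = 0)
    (hnondeg : (fderiv ℝ (fun y => gradient (fun y' => φ (a, y')) y) b).IsInvertible) :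
    ∃ h : E → F, h a = b ∧ ∀ᶠ x in 𝓝 a,
      ContDiffAt ℝ 1 h x ∧ (x, h x) ∈ V ∧ fderiv ℝ (fun y => φ (x, y)) (h x) = 0 := by
  set Ψ : E × F → F := fun q => gradient (fun y => φ (q.1, y)) q.2
  have hΨ : ContDiffAt ℝ 1 Ψ (a, b) :=
    (hφ.gradient_partial_right hV).contDiffAt (hV.mem_nhds hab)
  have hinv : (fderiv ℝ Ψ (a, b) ∘L inr ℝ E F).IsInvertible := by
    rwa [← (hΨ.differentiableAt one_ne_zero).fderiv_partial_right]
  set h := hΨ.implicitFunction one_ne_zero hinv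
  have hha : h a = b := hΨ.implicitFunction_apply_self one_ne_zero hinv
  have hh : ContDiffAt ℝ 1 h a := hΨ.contDiffAt_implicitFunction one_ne_zero hinv
  have hgraph : ∀ᶠ x in 𝓝 a, (x, h x) ∈ V :=
    (continuousAt_id.prodMk hh.continuousAt).eventually_mem
      (by rw [id, hha]; exact hV.mem_nhds hab)
  refine ⟨h, hha, ?_⟩
  filter_upwards [hh.eventually (by simp), hgraph,
    hΨ.eventually_apply_implicitFunction one_ne_zero hinv] with x hhx hx hΨx
  refine ⟨hhx, hx, ?_⟩
  simp only [Ψ, gradient, hcrit, map_zero, LinearIsometryEquiv.map_eq_zero_iff] at hΨx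
  exact hΨx

end PartialGradient

theorem stmt15 {H1 H2 H3 : Type*}
    [NormedAddCommGroup H1] [InnerProductSpace ℝ H1] [CompleteSpace H1]
    [NormedAddCommGroup H2] [InnerProductSpace ℝ H2] [CompleteSpace H2]
    [NormedAddCommGroup H3] [InnerProductSpace ℝ H3] [CompleteSpace H3]
    (ε : ℝ) (hε : 0 < ε)
    (f : H1 × H2 × H3 → ℝ)
    (hf : ContDiffOn ℝ 2 f (ball (0 : H1) ε ×ˢ ball (0 : H2) ε ×ˢ ball (0 : H3) ε))
    (hd3 : ∀ x1 ∈ ball (0 : H1) ε, fderiv ℝ (fun y : H3 => f (x1, 0, y)) 0 = 0)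
    (hd33 : ∃ T : H3 ≃L[ℝ] H3,
      (T : H3 →L[ℝ] H3) = fderiv ℝ (fun y => gradient (fun y' : H3 => f (0, 0, y')) y) 0) :
    ∃ δ : ℝ, 0 < δ ∧ δ < ε ∧ ∃ h : H1 × H2 → H3,
      h (0, 0) = 0 ∧
      ContDiffOn ℝ 1 h (ball (0 : H1) δ ×ˢ ball (0 : H2) δ) ∧
      (∀ x ∈ ball (0 : H1) δ ×ˢ ball (0 : H2) δ,
        fderiv ℝ (fun y : H3 => f (x.1, x.2, y)) (h x) = 0) ∧
      ContDiffOn ℝ 2 (fun x : H1 × H2 => f (x.1, x.2, h x))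
        (ball (0 : H1) δ ×ˢ ball (0 : H2) δ) ∧
      (∀ x ∈ ball (0 : H1) δ ×ˢ ball (0 : H2) δ,
        fderiv ℝ (fun x' : H1 × H2 => f (x'.1, x'.2, h x')) x
          = fderiv ℝ (fun x' : H1 × H2 => f (x'.1, x'.2, h x)) x) := by
  set V : Set ((H1 × H2) × H3) := (ball 0 ε ×ˢ ball 0 ε) ×ˢ ball 0 ε
  have hV : IsOpen V := (isOpen_ball.prod isOpen_ball).prod isOpen_ball
  set φ : (H1 × H2) × H3 → ℝ := fun q => f (q.1.1, q.1.2, q.2)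
  have hφ : ContDiffOn ℝ 2 φ V :=
    hf.comp (ContinuousLinearEquiv.prodAssoc ℝ H1 H2 H3).contDiff.contDiffOn
      fun q hq => ⟨hq.1.1, hq.1.2, hq.2⟩
  obtain ⟨h, h0, hh⟩ := exists_contDiffAt_fderiv_partial_right_eq_zero
    (a := ((0 : H1), (0 : H2))) (b := 0) hV hφ (by simp [V, hε]) (hd3 0 (mem_ball_self hε)) hd33
  obtain ⟨r, hr, hball⟩ := Metric.eventually_nhds_iff_ball.1 hh
  set δ := min r (ε / 2)
  have hW : ball (0 : H1) δ ×ˢ ball (0 : H2) δ ⊆ ball (0, 0) r := by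
    rw [ball_prod_same]; exact ball_subset_ball (min_le_left _ _)
  have hhW x (hx : x ∈ ball (0 : H1) δ ×ˢ ball (0 : H2) δ) := (hball x (hW hx)).1
  have hgraph x (hx : x ∈ ball (0 : H1) δ ×ˢ ball (0 : H2) δ) := (hball x (hW hx)).2.1
  have hcrit x (hx : x ∈ ball (0 : H1) δ ×ˢ ball (0 : H2) δ) := (hball x (hW hx)).2.2
  refine ⟨δ, lt_min hr (half_pos hε), (min_le_right _ _).trans_lt (half_lt_self hε), h, h0,
    fun x hx => (hhW x hx).contDiffWithinAt, hcrit, ?_, fun x hx => ?_⟩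
  · exact ContDiffOn.comp_graph_of_fderiv_partial_right_eq_zero (n := 1) le_rfl hV
      (isOpen_ball.prod isOpen_ball) hφ (fun x hx => (hhW x hx).contDiffWithinAt) hgraph hcrit
  · exact (hasFDerivAt_comp_graph_of_fderiv_partial_right_eq_zero
      ((hφ.contDiffAt (hV.mem_nhds (hgraph x hx))).differentiableAt two_ne_zero)
      ((hhW x hx).differentiableAt one_ne_zero) (hcrit x hx)).fderiv
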